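/- Let d ≥ 1, q ≥ 2d, n ≥ 1 and k ≥ 2. Then the maximum cardinality α(C_{d,q}^n) of an independent set in the n-th strong product power of the circular graph C_{d,q} satisfies α(C_{d,q}^n) ≤ B_k^{L∞}(q,n,d). -/

import Mathlib

/-- The Lee weight of an element of `ZMod q`. -/
def leeWt (q : ℕ) (a : ZMod q) : ℕ := min a.val (q - a.val)

/-- The Lee-infinity distance `d_{L∞}(u,v) = max_i w_L(u_i − v_i)`. -/
def leeDistInf (q n : ℕ) (u v : Fin n → ZMod q) : ℕ :=
  Finset.univ.sup fun i => leeWt q (u i - v i)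

/-- `𝒞_k`: the codes `C ⊆ (ℤ/qℤ)^n` with `|C| ≤ k`. -/
abbrev CodesLe (q n k : ℕ) : Type _ := {C : Finset (Fin n → ZMod q) // C.card ≤ k}

/-- `𝒞_k(D)`: the codes `C ∈ 𝒞_k` with `C ⊇ D` and `|D| + 2|C∖D| ≤ k`. -/
abbrev SubCodes (q n k : ℕ) (D : CodesLe q n k) : Type _ :=
  {C : CodesLe q n k // D.1 ⊆ C.1 ∧ D.1.card + 2 * (C.1 \ D.1).card ≤ k}

lemma union_card_le {α : Type*} [DecidableEq α] {k : ℕ} {D C C' : Finset α}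
    (hC : D ⊆ C) (hC' : D ⊆ C')
    (h : D.card + 2 * (C \ D).card ≤ k) (h' : D.card + 2 * (C' \ D).card ≤ k) :
    (C ∪ C').card ≤ k := by
  have h1 : C ∪ C' ⊆ D ∪ (C \ D) ∪ (C' \ D) := by
    intro a ha
    simp only [Finset.mem_union, Finset.mem_sdiff] at *
    rcases ha with ha | ha
    · by_cases hD : a ∈ D
      · exact Or.inl (Or.inl hD)
      · exact Or.inl (Or.inr ⟨ha, hD⟩)
    · by_cases hD : a ∈ D
      · exact Or.inl (Or.inl hD)
      · exact Or.inr ⟨ha, hD⟩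
  have h2 := Finset.card_le_card h1
  have h3 := Finset.card_union_le (D ∪ (C \ D)) (C' \ D)
  have h4 := Finset.card_union_le D (C \ D)
  omega

/-- The matrix `M_{k,D}(x)` with entries `x(C ∪ C′)` for `C, C′ ∈ 𝒞_k(D)`. -/
def MkD (q n k : ℕ) (x : CodesLe q n k → ℝ) (D : CodesLe q n k) :
    Matrix (SubCodes q n k D) (SubCodes q n k D) ℝ :=
  fun C C' => x ⟨C.1.1 ∪ C'.1.1, union_card_le C.2.1 C'.2.1 C.2.2 C'.2.2⟩

/-- Feasibility for the level-`k` semidefinite program bounding `α(C_{d,q}^n)`: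
`x(∅) = 1`, `x(S) = 0` whenever `S` has minimum Lee-infinity distance `< d`, and every
matrix `M_{k,D}(x)` is positive semidefinite. -/
def FeasibleLinf (q n d k : ℕ) [NeZero q] (x : CodesLe q n k → ℝ) : Prop :=
  x ⟨∅, by simp⟩ = 1 ∧
  (∀ S : CodesLe q n k,
    (∃ u ∈ S.1, ∃ v ∈ S.1, u ≠ v ∧ leeDistInf q n u v < d) → x S = 0) ∧
  ∀ D : CodesLe q n k, (MkD q n k x D).PosSemidef

/-- The objective value `Σ_{v ∈ ℤ_q^n} x({v})`. -/
def objectiveLinf (q n k : ℕ) [NeZero q] (hk : 1 ≤ k) (x : CodesLe q n k → ℝ) : ℝ :=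
  ∑ v : Fin n → ZMod q, x ⟨{v}, by simpa using hk⟩

/-- The semidefinite programming bound `B_k^{L∞}(q,n,d)`. -/
noncomputable def BLinf (q n d k : ℕ) [NeZero q] (hk : 1 ≤ k) : ℝ :=
  sSup {y | ∃ x : CodesLe q n k → ℝ,
    FeasibleLinf q n d k x ∧ y = objectiveLinf q n k hk x}

/-- The independence number of a graph on `(ℤ/qℤ)^n`: the maximum cardinality of a set
of vertices no two of which are adjacent. -/
noncomputable def alphaIndep (q n : ℕ) (G : SimpleGraph (Fin n → ZMod q)) : ℕ :=
  sSup {m | ∃ S : Finset (Fin n → ZMod q), S.card = m ∧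
    ∀ u ∈ S, ∀ v ∈ S, u ≠ v → ¬ G.Adj u v}

/-!
The indicator `x(C) = [C ⊆ S]` of a maximum independent set `S` is feasible with objective
value `|S|`: its moment matrices are rank one, and distinct non-adjacent vertices are at
Lee∞ distance at least `d`. The supremum is taken over a bounded set, because the `2 × 2`
minor of `M_{k,∅}(x)` on `∅, {v}` forces `x({v})² ≤ x({v})`, hence `x({v}) ≤ 1`.
-/

section

open Finset Matrix

open scoped ComplexOrder in
theorem Matrix.PosSemidef.mul_apply_le_mul_diag {𝕜 ι : Type*} [RCLike 𝕜] [Fintype ι]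
    {M : Matrix ι ι 𝕜} (hM : M.PosSemidef) (i j : ι) :
    M i j * M j i ≤ M i i * M j j := by
  have h := (hM.submatrix ![i, j]).det_nonneg
  rw [det_fin_two] at h
  simpa [mul_comm (M j j)] using h

variable {q n d k : ℕ}

lemma FeasibleLinf.single_le_one [NeZero q] {x : CodesLe q n k → ℝ}
    (hx : FeasibleLinf q n d k x) (hk : 2 ≤ k) (v : Fin n → ZMod q) :
    x ⟨{v}, (card_singleton v).trans_le (Nat.one_le_of_lt hk)⟩ ≤ 1 := by
  let D : CodesLe q n k := ⟨∅, by simp⟩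
  let empty : SubCodes q n k D := ⟨D, by simp [D]⟩
  let single : SubCodes q n k D :=
    ⟨⟨{v}, (card_singleton v).trans_le (Nat.one_le_of_lt hk)⟩, by simp [D]; omega⟩
  have h := (hx.2.2 D).mul_apply_le_mul_diag empty single
  simp only [MkD, empty, single, D, empty_union, union_idempotent, union_empty] at h
  rw [hx.1, one_mul] at h
  nlinarith

lemma bddAbove_objectiveLinf [NeZero q] (hk : 2 ≤ k) :
    BddAbove {y | ∃ x : CodesLe q n k → ℝ,
      FeasibleLinf q n d k x ∧ y = objectiveLinf q n k (Nat.one_le_of_lt hk) x} := by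
  refine ⟨Fintype.card (Fin n → ZMod q), ?_⟩
  rintro y ⟨x, hx, rfl⟩
  calc objectiveLinf q n k _ x ≤ ∑ _v : Fin n → ZMod q, (1 : ℝ) :=
        sum_le_sum fun v _ => hx.single_le_one hk v
    _ = Fintype.card (Fin n → ZMod q) := by simp

def codeIndicator (q n k : ℕ) (S : Finset (Fin n → ZMod q)) (C : CodesLe q n k) : ℝ :=
  if C.1 ⊆ S then 1 else 0

lemma MkD_codeIndicator (S : Finset (Fin n → ZMod q)) (D : CodesLe q n k) :
    MkD q n k (codeIndicator q n k S) D =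
      vecMulVec (fun C => codeIndicator q n k S C.1) (fun C => codeIndicator q n k S C.1) := by
  ext C C'
  simp only [MkD, codeIndicator, vecMulVec_apply, union_subset_iff]
  split_ifs <;> simp_all

lemma feasibleLinf_codeIndicator [NeZero q] {S : Finset (Fin n → ZMod q)}
    (hS : ∀ u ∈ S, ∀ v ∈ S, u ≠ v → d ≤ leeDistInf q n u v) :
    FeasibleLinf q n d k (codeIndicator q n k S) := by
  refine ⟨by simp [codeIndicator], ?_, fun D => ?_⟩
  · rintro C ⟨u, hu, v, hv, huv, hdist⟩
    rw [codeIndicator, if_neg]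
    exact fun hCS => (hS u (hCS hu) v (hCS hv) huv).not_gt hdist
  · rw [MkD_codeIndicator]
    simpa using posSemidef_vecMulVec_self_star fun C : SubCodes q n k D =>
      codeIndicator q n k S C.1

lemma objectiveLinf_codeIndicator [NeZero q] (hk : 1 ≤ k) (S : Finset (Fin n → ZMod q)) :
    objectiveLinf q n k hk (codeIndicator q n k S) = S.card := by
  simp [objectiveLinf, codeIndicator]

lemma exists_card_eq_alphaIndep [NeZero q] (G : SimpleGraph (Fin n → ZMod q)) :
    ∃ S : Finset (Fin n → ZMod q), S.card = alphaIndep q n G ∧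
      ∀ u ∈ S, ∀ v ∈ S, u ≠ v → ¬ G.Adj u v := by
  refine Nat.sSup_mem (s := {m | ∃ S : Finset (Fin n → ZMod q), S.card = m ∧
    ∀ u ∈ S, ∀ v ∈ S, u ≠ v → ¬ G.Adj u v}) ⟨0, ∅, by simp⟩ ⟨Fintype.card (Fin n → ZMod q), ?_⟩
  rintro m ⟨S, rfl, -⟩
  exact S.card_le_univ

lemma leeWt_le_leeDistInf (u v : Fin n → ZMod q) (i : Fin n) :
    leeWt q (u i - v i) ≤ leeDistInf q n u v :=
  le_sup (f := fun i => leeWt q (u i - v i)) (mem_univ i)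

end

/-- for `d ≥ 1`, `q ≥ 2d`, `n ≥ 1` and `k ≥ 2`, the independence number
of the `n`-th strong product power of the circular graph `C_{d,q}` is at most
`B_k^{L∞}(q,n,d)`. -/
theorem stmt19 (q n d k : ℕ) [NeZero q]
    (hk : 2 ≤ k)
    (G : SimpleGraph (Fin n → ZMod q))
    (hG : ∀ u v, G.Adj u v ↔ u ≠ v ∧ ∀ i, u i = v i ∨ leeWt q (u i - v i) < d) :
    (alphaIndep q n G : ℝ) ≤ BLinf q n d k (by omega) := by
  obtain ⟨S, hcard, hindep⟩ := exists_card_eq_alphaIndep G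
  have hcode : ∀ u ∈ S, ∀ v ∈ S, u ≠ v → d ≤ leeDistInf q n u v := by
    intro u hu v hv huv
    have hnadj := hindep u hu v hv huv
    simp only [hG, ne_eq, huv, not_false_eq_true, true_and, not_forall, not_or, not_lt] at hnadj
    obtain ⟨i, -, hi⟩ := hnadj
    exact hi.trans (leeWt_le_leeDistInf u v i)
  rw [← hcard, ← objectiveLinf_codeIndicator (Nat.one_le_of_lt hk)]
  exact le_csSup (bddAbove_objectiveLinf hk) ⟨_, feasibleLinf_codeIndicator hcode, rfl⟩
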